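/- arXiv:2107.12301 — 3 statements merged into one kernel-verified Lean document; each statement's English description precedes it below -/
import Mathlib

section
/- Suppose g : ℝ^{d₁} × ℝ^{d₂} → ℝ is differentiable, y ↦ g(x,y) is μ-strongly convex for every x (μ > 0) with unique minimizer y*(x), and the partial gradient satisfies ‖∇_y g(x₁,y) − ∇_y g(x₂,y)‖ ≤ L‖x₁ − x₂‖ for all x₁, x₂ ∈ ℝ^{d₁} and y ∈ ℝ^{d₂}. Then the minimizer map is κ-Lipschitz with κ = L/μ: ‖y*(x₁) − y*(x₂)‖ ≤ (L/μ)‖x₁ − x₂‖ for all x₁, x₂. -/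
/-!
Strong convexity makes each partial gradient `∇_y g(x, ·)` strongly monotone with modulus `μ`,
hence `μ ‖y - y'‖ ≤ ‖∇_y g(x, y) - ∇_y g(x, y')‖`. Taking `x = x₁`, `y = y*(x₁)`, `y' = y*(x₂)`
and using that the gradient vanishes at both minimizers, the right-hand side equals
`‖∇_y g(x₂, y*(x₂)) - ∇_y g(x₁, y*(x₂))‖ ≤ L ‖x₁ - x₂‖`.
-/

open scoped RealInnerProductSpace

section GradientFacts

variable {F : Type*} [NormedAddCommGroup F] [InnerProductSpace ℝ F]

theorem IsLocalMin.hasGradientAt_eq_zero [CompleteSpace F] {f : F → ℝ} {f' a : F}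
    (hmin : IsLocalMin f a) (hf : HasGradientAt f f' a) : f' = 0 :=
  (InnerProductSpace.toDual ℝ F).map_eq_zero_iff.mp (hmin.hasFDerivAt_eq_zero hf.hasFDerivAt)

theorem mul_sq_norm_sub_le_inner_of_strongConvex {f : F → ℝ} {G : F → F} {μ : ℝ}
    (hsc : ∀ y y', f y + ⟪G y, y' - y⟫ + μ / 2 * ‖y' - y‖ ^ 2 ≤ f y') (y y' : F) :
    μ * ‖y - y'‖ ^ 2 ≤ ⟪G y - G y', y - y'⟫ := by
  have h₁ := hsc y y'
  have h₂ := hsc y' y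
  have hflip : ⟪G y, y' - y⟫ = -⟪G y, y - y'⟫ := by rw [← inner_neg_right, neg_sub]
  rw [hflip, norm_sub_rev] at h₁
  rw [inner_sub_left]
  linarith

theorem mul_norm_sub_le_norm_sub_of_strongConvex {f : F → ℝ} {G : F → F} {μ : ℝ}
    (hsc : ∀ y y', f y + ⟪G y, y' - y⟫ + μ / 2 * ‖y' - y‖ ^ 2 ≤ f y') (y y' : F) :
    μ * ‖y - y'‖ ≤ ‖G y - G y'‖ := by
  rcases (norm_nonneg (y - y')).eq_or_lt with hzero | hpos
  · rw [← hzero, mul_zero]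
    exact norm_nonneg _
  refine le_of_mul_le_mul_right ?_ hpos
  calc μ * ‖y - y'‖ * ‖y - y'‖ = μ * ‖y - y'‖ ^ 2 := by ring
    _ ≤ ⟪G y - G y', y - y'⟫ := mul_sq_norm_sub_le_inner_of_strongConvex hsc y y'
    _ ≤ ‖G y - G y'‖ * ‖y - y'‖ := real_inner_le_norm _ _

end GradientFacts

variable {d₁ d₂ : ℕ}

local notation "E₁" => EuclideanSpace ℝ (Fin d₁)
local notation "E₂" => EuclideanSpace ℝ (Fin d₂)

theorem minimizer_map_lipschitz_general
    (μ L : ℝ) (hμ : 0 < μ)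
    (g : E₁ → E₂ → ℝ) (ggy : E₁ → E₂ → E₂) (ystar : E₁ → E₂)
    (hggy : ∀ x y, HasGradientAt (fun y' => g x y') (ggy x y) y)
    (hsc : ∀ (x : E₁) (y y' : E₂),
      g x y + ⟪ggy x y, y' - y⟫ + μ / 2 * ‖y' - y‖ ^ 2 ≤ g x y')
    (hLip : ∀ (x₁ x₂ : E₁) (y : E₂), ‖ggy x₁ y - ggy x₂ y‖ ≤ L * ‖x₁ - x₂‖)
    (hmin : ∀ x y, g x (ystar x) ≤ g x y) :
    ∀ x₁ x₂ : E₁, ‖ystar x₁ - ystar x₂‖ ≤ L / μ * ‖x₁ - x₂‖ := by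
  have hcrit : ∀ x, ggy x (ystar x) = 0 := fun x =>
    IsLocalMin.hasGradientAt_eq_zero (Filter.Eventually.of_forall (hmin x)) (hggy x (ystar x))
  intro x₁ x₂
  rw [div_mul_eq_mul_div, le_div_iff₀' hμ]
  calc μ * ‖ystar x₁ - ystar x₂‖
      ≤ ‖ggy x₁ (ystar x₁) - ggy x₁ (ystar x₂)‖ :=
        mul_norm_sub_le_norm_sub_of_strongConvex (hsc x₁) _ _
    _ = ‖ggy x₂ (ystar x₂) - ggy x₁ (ystar x₂)‖ := by rw [hcrit x₁, hcrit x₂]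
    _ ≤ L * ‖x₂ - x₁‖ := hLip x₂ x₁ _
    _ = L * ‖x₁ - x₂‖ := by rw [norm_sub_rev]

/-- If `y ↦ g(x,y)` is `μ`-strongly convex for every `x` with unique minimizer `y*(x)`, and
`∇_y g` is `L`-Lipschitz in `x`, then the minimizer map is `(L/μ)`-Lipschitz. -/
theorem minimizer_map_lipschitz
    (hd₁ : 0 < d₁) (hd₂ : 0 < d₂)
    (μ L : ℝ) (hμ : 0 < μ)
    (g : E₁ → E₂ → ℝ) (ggy : E₁ → E₂ → E₂) (ystar : E₁ → E₂)
    (hgdiff : Differentiable ℝ (fun p : E₁ × E₂ => g p.1 p.2))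
    (hggy : ∀ x y, HasGradientAt (fun y' => g x y') (ggy x y) y)
    (hsc : ∀ (x : E₁) (y y' : E₂),
      g x y + ⟪ggy x y, y' - y⟫ + μ / 2 * ‖y' - y‖ ^ 2 ≤ g x y')
    (hLip : ∀ (x₁ x₂ : E₁) (y : E₂), ‖ggy x₁ y - ggy x₂ y‖ ≤ L * ‖x₁ - x₂‖)
    (hmin : ∀ x y, g x (ystar x) ≤ g x y) :
    ∀ x₁ x₂ : E₁, ‖ystar x₁ - ystar x₂‖ ≤ L / μ * ‖x₁ - x₂‖ :=
  minimizer_map_lipschitz_general μ L hμ g ggy ystar hggy hsc hLip hmin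
end

section
/- Let λ > 0, K ≥ 1, fix y⁰ ∈ ℝ^{d₂}, and define the gradient-descent maps y^0(x) = y⁰ and y^k(x) = y^{k−1}(x) − λ∇_y g(x, y^{k−1}(x)) for k = 1, …, K. Then the function x ↦ f(x, y^K(x)) is differentiable, and its gradient at x equals ∇_x f(x, y^K(x)) − λ Σ_{k=0}^{K−1} ∇²_{xy} g(x, y^k(x)) · [Π_{j=k+1}^{K−1} (I − λ∇²_{yy} g(x, y^j(x)))] · ∇_y f(x, y^K(x)), where the matrix product is taken in order of increasing j from left to right and equals the identity when k = K−1. -/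
open scoped RealInnerProductSpace

variable {d₁ d₂ : ℕ}

local notation "E₁" => EuclideanSpace ℝ (Fin d₁)
local notation "E₂" => EuclideanSpace ℝ (Fin d₂)

/-- The gradient-descent maps `y^0(x) = y⁰`, `y^k(x) = y^{k-1}(x) - λ ∇_y g(x, y^{k-1}(x))`. -/
noncomputable def gdSeq (ggy : E₁ → E₂ → E₂) (lam : ℝ) (y0 : E₂) : ℕ → E₁ → E₂
  | 0 => fun _ => y0
  | k + 1 => fun x => gdSeq ggy lam y0 k x - lam • ggy x (gdSeq ggy lam y0 k x)

/-!
By the chain rule, the Jacobian `D_k` of `x ↦ y^k(x)` obeys the forward recursion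
`D_{k+1} = D_k - λ (∇²_{xy} gᵀ + ∇²_{yy} g · D_k)` with `D_0 = 0`. Since `∇²_{yy} g` is symmetric
(Schwarz), writing `D_kᵀ = -λ S_k` turns this into the backward recursion
`S_{k+1} = S_k (I - λ ∇²_{yy} g) + ∇²_{xy} g`, `S_0 = 0`, whose solution is the sum of ordered
products in the statement. The gradient of `x ↦ f(x, y^K(x))` is then `∇_x f + D_Kᵀ ∇_y f`.
-/

open ContinuousLinearMap InnerProductSpace

section PartialDerivatives

variable {𝕜 E F G : Type*} [NontriviallyNormedField 𝕜]
  [NormedAddCommGroup E] [NormedSpace 𝕜 E] [NormedAddCommGroup F] [NormedSpace 𝕜 F]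
  [NormedAddCommGroup G] [NormedSpace 𝕜 G]

theorem hasFDerivAt_comp_prodMk_of_partial {φ : E → F → G} {y : E → F} {A : E →L[𝕜] G}
    {B : F →L[𝕜] G} {D : E →L[𝕜] F} {x : E}
    (hφ : DifferentiableAt 𝕜 (Function.uncurry φ) (x, y x))
    (hA : HasFDerivAt (fun x' => φ x' (y x)) A x) (hB : HasFDerivAt (φ x) B (y x))
    (hy : HasFDerivAt y D x) :
    HasFDerivAt (fun x' => φ x' (y x')) (A + B.comp D) x := by
  have hL := hφ.hasFDerivAt
  have hLA := (hL.comp (f := fun e => (e, y x)) x (hasFDerivAt_prodMk_left x (y x))).unique hA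
  have hLB := (hL.comp (f := fun f => (x, f)) (y x) (hasFDerivAt_prodMk_right x (y x))).unique hB
  refine (hL.comp (f := fun e => (e, y e)) x ((hasFDerivAt_id x).prodMk hy)).congr_fderiv ?_
  ext v
  rw [← hLA, ← hLB]
  exact (comp_inl_add_comp_inr (fderiv 𝕜 (Function.uncurry φ) (x, y x)) (v, D v)).symm

end PartialDerivatives

section Gradients

variable {E F : Type*} [NormedAddCommGroup E] [InnerProductSpace ℝ E]
  [NormedAddCommGroup F] [InnerProductSpace ℝ F] [CompleteSpace F]

theorem hasGradientAt_comp_prodMk_of_partial [CompleteSpace E] {φ : E → F → ℝ} {y : E → F}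
    {a : E} {b : F} {D : E →L[ℝ] F} {x : E}
    (hφ : DifferentiableAt ℝ (Function.uncurry φ) (x, y x))
    (ha : HasGradientAt (fun x' => φ x' (y x)) a x) (hb : HasGradientAt (φ x) b (y x))
    (hy : HasFDerivAt y D x) :
    HasGradientAt (fun x' => φ x' (y x')) (a + adjoint D b) x := by
  rw [hasGradientAt_iff_hasFDerivAt]
  refine (hasFDerivAt_comp_prodMk_of_partial hφ ha hb hy).congr_fderiv ?_
  ext v
  simp [toDual_apply_apply, adjoint_inner_left]

theorem isSelfAdjoint_of_hasFDerivAt_gradient {φ : F → ℝ} {grad : F → F} {H : F →L[ℝ] F} {y : F}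
    (hφ : ∀ y, HasGradientAt φ (grad y) y) (hH : HasFDerivAt grad H y) : IsSelfAdjoint H := by
  refine LinearMap.IsSymmetric.isSelfAdjoint fun v w => ?_
  have hsymm : ⟪H v, w⟫ = ⟪H w, v⟫ := second_derivative_symmetric hφ
    ((innerSL ℝ : F →L[ℝ] F →L[ℝ] ℝ).hasFDerivAt.comp y hH) v w
  exact hsymm.trans (real_inner_comm _ _)

theorem contDiff_uncurry_of_hasGradientAt_right {g : E → F → ℝ} {ggy : E → F → F}
    {m n : WithTop ℕ∞} (hg : ContDiff ℝ n (Function.uncurry g)) (hmn : m + 1 ≤ n)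
    (hggy : ∀ x y, HasGradientAt (g x) (ggy x y) y) :
    ContDiff ℝ m (Function.uncurry ggy) := by
  have hn : n ≠ 0 := by rintro rfl; simp at hmn
  have key : Function.uncurry ggy = fun p =>
      (toDual ℝ F).symm ((fderiv ℝ (Function.uncurry g) p).comp (inr ℝ E F)) := by
    funext ⟨x, y⟩
    rw [← (hggy x y).hasFDerivAt.unique ((hg.differentiable hn (x, y)).hasFDerivAt.comp
      (f := fun f => (x, f)) y (hasFDerivAt_prodMk_right x y))]
    simp
  rw [key]
  exact (toDual ℝ F).symm.contDiff.comp ((hg.fderiv_right hmn).clm_comp contDiff_const)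

end Gradients

section OrderedProd

variable {M : Type*} [Monoid M]

def orderedProdIoo (A : ℕ → M) (k K : ℕ) : M :=
  ((List.range (K - 1 - k)).map fun i => A (k + 1 + i)).prod

theorem orderedProdIoo_self_succ (A : ℕ → M) (K : ℕ) : orderedProdIoo A K (K + 1) = 1 := by
  simp [orderedProdIoo]

theorem orderedProdIoo_succ_right (A : ℕ → M) {k K : ℕ} (hk : k < K) :
    orderedProdIoo A k (K + 1) = orderedProdIoo A k K * A K := by
  have hlen : K + 1 - 1 - k = K - 1 - k + 1 := by omega
  have hlast : k + 1 + (K - 1 - k) = K := by omega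
  simp only [orderedProdIoo, hlen, List.range_succ, List.map_append, List.prod_append, hlast,
    List.map_cons, List.map_nil, List.prod_cons, List.prod_nil, mul_one]

end OrderedProd

theorem sum_comp_orderedProdIoo_succ {E F : Type*} [NormedAddCommGroup E] [NormedSpace ℝ E]
    [NormedAddCommGroup F] [NormedSpace ℝ F] (G : ℕ → F →L[ℝ] E) (A : ℕ → F →L[ℝ] F) (K : ℕ) :
    ∑ k ∈ Finset.range (K + 1), (G k).comp (orderedProdIoo A k (K + 1)) =
      (∑ k ∈ Finset.range K, (G k).comp (orderedProdIoo A k K)).comp (A K) + G K := by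
  rw [Finset.sum_range_succ, orderedProdIoo_self_succ, finsetSum_comp, one_def, comp_id]
  congr 1
  refine Finset.sum_congr rfl fun k hk => ?_
  rw [orderedProdIoo_succ_right A (Finset.mem_range.1 hk), mul_def, comp_assoc]

-- With `D = (-λ S)ᵀ`, one step `D ↦ D - λ (Gᵀ + H D)` of the forward recursion is one step
-- `S ↦ S (1 - λ H) + G` of the backward one.
theorem adjoint_jacobian_recursion {E F : Type*} [NormedAddCommGroup E] [InnerProductSpace ℝ E]
    [CompleteSpace E] [NormedAddCommGroup F] [InnerProductSpace ℝ F] [CompleteSpace F]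
    (S G : F →L[ℝ] E) {H : F →L[ℝ] F} (hH : IsSelfAdjoint H) (lam : ℝ) :
    adjoint (-lam • S) - lam • (adjoint G + H.comp (adjoint (-lam • S))) =
      adjoint (-lam • (S.comp (1 - lam • H) + G)) := by
  simp only [map_smul, map_add, adjoint_comp, map_sub, one_def, adjoint_id, hH.adjoint_eq,
    comp_smul, sub_comp, smul_comp, id_comp]
  module

theorem hasFDerivAt_gdSeq {ggy : E₁ → E₂ → E₂} {Hyy : E₁ → E₂ → E₂ →L[ℝ] E₂}
    {Gxy : E₁ → E₂ → E₂ →L[ℝ] E₁} (hggy : Differentiable ℝ (Function.uncurry ggy))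
    (hHyy : ∀ x y, HasFDerivAt (ggy x) (Hyy x y) y)
    (hGxy : ∀ x y, HasFDerivAt (fun x' => ggy x' y) (adjoint (Gxy x y)) x)
    (hsa : ∀ x y, IsSelfAdjoint (Hyy x y)) (lam : ℝ) (y0 : E₂) (K : ℕ) (x : E₁) :
    HasFDerivAt (gdSeq ggy lam y0 K)
      (adjoint (-lam • ∑ k ∈ Finset.range K, (Gxy x (gdSeq ggy lam y0 k x)).comp
        (orderedProdIoo (fun j => 1 - lam • Hyy x (gdSeq ggy lam y0 j x)) k K))) x := by
  induction K with
  | zero =>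
    -- plain `smul_zero` does not unify with this scalar action on `E₂ →L[ℝ] E₁`
    rw [Finset.sum_range_zero, smul_zero (M := ℝ) (A := E₂ →L[ℝ] E₁), map_zero]
    exact hasFDerivAt_const y0 x
  | succ K ih =>
    have hstep := ih.sub ((hasFDerivAt_comp_prodMk_of_partial (hggy _) (hGxy x _)
      (hHyy x _) ih).const_smul lam)
    rw [sum_comp_orderedProdIoo_succ, ← adjoint_jacobian_recursion _ _ (hsa _ _)]
    exact hstep

theorem gradient_of_iterative_differentiation_general
    (f g : E₁ → E₂ → ℝ)
    (gfx : E₁ → E₂ → E₁) (gfy : E₁ → E₂ → E₂)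
    (ggy : E₁ → E₂ → E₂)
    (Hyy : E₁ → E₂ → E₂ →L[ℝ] E₂) (Gxy : E₁ → E₂ → E₂ →L[ℝ] E₁)
    (hf : ContDiff ℝ 2 (fun p : E₁ × E₂ => f p.1 p.2))
    (hg : ContDiff ℝ 2 (fun p : E₁ × E₂ => g p.1 p.2))
    (hgfx : ∀ x y, HasGradientAt (fun x' => f x' y) (gfx x y) x)
    (hgfy : ∀ x y, HasGradientAt (fun y' => f x y') (gfy x y) y)
    (hggy : ∀ x y, HasGradientAt (fun y' => g x y') (ggy x y) y)
    (hHyy : ∀ x y, HasFDerivAt (fun y' => ggy x y') (Hyy x y) y)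
    (hGxy : ∀ x y, HasFDerivAt (fun x' => ggy x' y) (ContinuousLinearMap.adjoint (Gxy x y)) x)
    (lam : ℝ) (K : ℕ) (y0 : E₂) :
    ∀ x : E₁,
      DifferentiableAt ℝ (fun x' => f x' (gdSeq ggy lam y0 K x')) x ∧
      HasGradientAt (fun x' => f x' (gdSeq ggy lam y0 K x'))
        (gfx x (gdSeq ggy lam y0 K x) -
          lam • ∑ k ∈ Finset.range K,
            Gxy x (gdSeq ggy lam y0 k x)
              ((((List.range (K - 1 - k)).map
                    (fun i => (1 : E₂ →L[ℝ] E₂) -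
                      lam • Hyy x (gdSeq ggy lam y0 (k + 1 + i) x))).prod)
                (gfy x (gdSeq ggy lam y0 K x)))) x := by
  intro x
  have hHyy_sa : ∀ x y, IsSelfAdjoint (Hyy x y) := fun x y =>
    isSelfAdjoint_of_hasFDerivAt_gradient (hggy x) (hHyy x y)
  have hggy_diff : Differentiable ℝ (Function.uncurry ggy) :=
    (contDiff_uncurry_of_hasGradientAt_right hg (by norm_num) hggy).differentiable one_ne_zero
  have hgrad := hasGradientAt_comp_prodMk_of_partial (hf.differentiable two_ne_zero _)
    (hgfx x _) (hgfy x _) (hasFDerivAt_gdSeq hggy_diff hHyy hGxy hHyy_sa lam y0 K x)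
  rw [adjoint_adjoint] at hgrad
  refine ⟨hgrad.differentiableAt, ?_⟩
  convert hgrad using 2
  simp only [smul_apply, sum_apply, comp_apply, neg_smul, sub_eq_add_neg, orderedProdIoo]

/-- The function `x ↦ f(x, y^K(x))` is differentiable with gradient
`∇ₓ f(x, y^K(x)) − λ Σ_{k=0}^{K−1} ∇²_{xy} g(x,y^k(x)) [Π_{j=k+1}^{K−1} (I − λ∇²_{yy} g(x,y^j(x)))]
∇_y f(x, y^K(x))`, the matrix product taken in increasing order of `j` from left to right
(the identity when `k = K−1`). -/
theorem gradient_of_iterative_differentiation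
    (hd₁ : 0 < d₁) (hd₂ : 0 < d₂)
    (f g : E₁ → E₂ → ℝ)
    (gfx : E₁ → E₂ → E₁) (gfy : E₁ → E₂ → E₂)
    (ggy : E₁ → E₂ → E₂)
    (Hyy : E₁ → E₂ → E₂ →L[ℝ] E₂) (Gxy : E₁ → E₂ → E₂ →L[ℝ] E₁)
    (hf : ContDiff ℝ 2 (fun p : E₁ × E₂ => f p.1 p.2))
    (hg : ContDiff ℝ 2 (fun p : E₁ × E₂ => g p.1 p.2))
    (hgfx : ∀ x y, HasGradientAt (fun x' => f x' y) (gfx x y) x)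
    (hgfy : ∀ x y, HasGradientAt (fun y' => f x y') (gfy x y) y)
    (hggy : ∀ x y, HasGradientAt (fun y' => g x y') (ggy x y) y)
    (hHyy : ∀ x y, HasFDerivAt (fun y' => ggy x y') (Hyy x y) y)
    (hGxy : ∀ x y, HasFDerivAt (fun x' => ggy x' y) (ContinuousLinearMap.adjoint (Gxy x y)) x)
    (lam : ℝ) (hlam : 0 < lam) (K : ℕ) (hK : 1 ≤ K) (y0 : E₂) :
    ∀ x : E₁,
      DifferentiableAt ℝ (fun x' => f x' (gdSeq ggy lam y0 K x')) x ∧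
      HasGradientAt (fun x' => f x' (gdSeq ggy lam y0 K x'))
        (gfx x (gdSeq ggy lam y0 K x) -
          lam • ∑ k ∈ Finset.range K,
            Gxy x (gdSeq ggy lam y0 k x)
              ((((List.range (K - 1 - k)).map
                    (fun i => (1 : E₂ →L[ℝ] E₂) -
                      lam • Hyy x (gdSeq ggy lam y0 (k + 1 + i) x))).prod)
                (gfy x (gdSeq ggy lam y0 K x)))) x :=
  gradient_of_iterative_differentiation_general f g gfx gfy ggy Hyy Gxy hf hg hgfx hgfy hggy hHyy
    hGxy lam K y0
end

section
/- Let z ∈ 𝒳, w ∈ ℝ^{d₁}, γ > 0, and let x⁺ be a minimizer over 𝒳 of x ↦ ⟨w, x⟩ + h(x) + (1/γ)D_ψ(x, z). Setting Ĝ = (z − x⁺)/γ, one has ⟨w, Ĝ⟩ ≥ ρ‖Ĝ‖² + (1/γ)(h(x⁺) − h(z)). -/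
/-! The objective `u ↦ ⟪w, u⟫ + h u + (1/γ) D_ψ(u, z)` is `(ρ/γ)`-strongly convex on `𝒳`, so it
grows at least quadratically away from its minimizer `x⁺`. Evaluating at `z`, where the Bregman
term vanishes, gives `⟪w, z - x⁺⟫ + h z - h x⁺ ≥ (1/γ) D_ψ(x⁺, z) + (ρ/(2γ)) ‖z - x⁺‖²`, and the
first-order bound `D_ψ(x⁺, z) ≥ (ρ/2) ‖x⁺ - z‖²` for the strongly convex `ψ` doubles the
quadratic term. Both quadratic bounds come from letting `t → 0⁺` in the strong convexity
inequality along the segment `[x, x + t (y - x)]`. -/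

open scoped RealInnerProductSpace

variable {d₁ : ℕ}

local notation "E₁" => EuclideanSpace ℝ (Fin d₁)

open Set Filter Topology

theorem le_sub_of_tendsto_of_forall_le_sub_one_sub_mul {g : ℝ → ℝ} {L a c : ℝ}
    (hg : Tendsto g (𝓝[>] 0) (𝓝 L)) (h : ∀ t ∈ Ioo (0 : ℝ) 1, g t ≤ a - (1 - t) * c) :
    L ≤ a - c := by
  have hlim : Tendsto (fun t : ℝ ↦ a - (1 - t) * c) (𝓝[>] 0) (𝓝 (a - c)) := by
    have hcont : Continuous fun t : ℝ ↦ a - (1 - t) * c := by fun_prop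
    simpa using (hcont.tendsto 0).mono_left nhdsWithin_le_nhds
  refine le_of_tendsto_of_tendsto hg hlim ?_
  filter_upwards [Ioo_mem_nhdsGT one_pos] with t ht using h t ht

section StrongConvexOn

variable {E : Type*} [NormedAddCommGroup E] [NormedSpace ℝ E] {s : Set E} {m c : ℝ} {f g : E → ℝ}
  {x y : E} {t : ℝ}

theorem StrongConvexOn.apply_add_smul_sub_le (hf : StrongConvexOn s m f) (hx : x ∈ s) (hy : y ∈ s)
    (ht₀ : 0 ≤ t) (ht₁ : t ≤ 1) :
    f (x + t • (y - x)) ≤ f x + t * (f y - f x - (1 - t) * (m / 2 * ‖y - x‖ ^ 2)) := by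
  have hseg : x + t • (y - x) = (1 - t) • x + t • y := by module
  have := hf.2 hx hy (sub_nonneg.2 ht₁) ht₀ (sub_add_cancel 1 t)
  rw [hseg, norm_sub_rev y x]
  simp only [smul_eq_mul] at this
  linarith

theorem StrongConvexOn.add_sq_norm_le_of_isMinOn (hf : StrongConvexOn s m f) (hx : x ∈ s)
    (hy : y ∈ s) (hmin : IsMinOn f s x) : f x + m / 2 * ‖y - x‖ ^ 2 ≤ f y := by
  suffices (0 : ℝ) ≤ f y - f x - m / 2 * ‖y - x‖ ^ 2 by linarith
  refine le_sub_of_tendsto_of_forall_le_sub_one_sub_mul tendsto_const_nhds fun t ht ↦ ?_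
  have hmem : x + t • (y - x) ∈ s := hf.1.add_smul_sub_mem hx hy (Ioo_subset_Icc_self ht)
  have hstep := (hf.apply_add_smul_sub_le hx hy ht.1.le ht.2.le).trans' (hmin hmem)
  have : 0 ≤ t * (f y - f x - (1 - t) * (m / 2 * ‖y - x‖ ^ 2)) := by linarith
  linarith [nonneg_of_mul_nonneg_right this ht.1]

theorem StrongConvexOn.add_fderiv_add_sq_norm_le {f' : E →L[ℝ] ℝ} (hf : StrongConvexOn s m f)
    (hx : x ∈ s) (hy : y ∈ s) (hf' : HasFDerivAt f f' x) :
    f x + f' (y - x) + m / 2 * ‖y - x‖ ^ 2 ≤ f y := by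
  have hline : HasDerivAt (fun t : ℝ ↦ x + t • (y - x)) (y - x) 0 := by
    simpa using ((hasDerivAt_id (0 : ℝ)).smul_const (y - x)).const_add x
  have hφ : HasDerivAt (fun t : ℝ ↦ f (x + t • (y - x))) (f' (y - x)) 0 := by
    have hf₀ : HasFDerivAt f f' (x + (0 : ℝ) • (y - x)) := by rwa [zero_smul, add_zero]
    exact hf₀.comp_hasDerivAt 0 hline
  suffices f' (y - x) ≤ f y - f x - m / 2 * ‖y - x‖ ^ 2 by linarith
  refine le_sub_of_tendsto_of_forall_le_sub_one_sub_mul (by simpa using hφ.tendsto_slope_zero_right)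
    fun t ht ↦ ?_
  have := hf.apply_add_smul_sub_le hx hy ht.1.le ht.2.le
  rw [inv_mul_le_iff₀ ht.1]
  linarith

theorem StrongConvexOn.const_mul (hc : 0 ≤ c) (hf : StrongConvexOn s m f) :
    StrongConvexOn s (c * m) fun x ↦ c * f x := by
  refine ⟨hf.1, fun x hx y hy a b ha hb hab ↦ ?_⟩
  have := mul_le_mul_of_nonneg_left (hf.2 hx hy ha hb hab) hc
  simp only [smul_eq_mul] at this ⊢
  linarith

theorem StrongConvexOn.subset {t : Set E} (hf : StrongConvexOn t m f) (hst : s ⊆ t)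
    (hs : Convex ℝ s) : StrongConvexOn s m f :=
  ⟨hs, fun _ hx _ hy ↦ hf.2 (hst hx) (hst hy)⟩

theorem ConvexOn.add_strongConvexOn (hf : ConvexOn ℝ s f) (hg : StrongConvexOn s m g) :
    StrongConvexOn s m (f + g) := by
  have hsum := (uniformConvexOn_zero.2 hf).add hg
  rwa [zero_add] at hsum

end StrongConvexOn

section Bregman

variable {E : Type*} [NormedAddCommGroup E] [InnerProductSpace ℝ E] {s : Set E} {m : ℝ} {f : E → ℝ}

theorem StrongConvexOn.sub_sub_inner (hf : StrongConvexOn s m f) (c : ℝ) (a z : E) :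
    StrongConvexOn s m fun x ↦ f x - c - ⟪a, x - z⟫ := by
  refine ⟨hf.1, fun x hx y hy α β hα hβ hαβ ↦ ?_⟩
  have haff : ⟪a, α • x + β • y - z⟫ = α * ⟪a, x - z⟫ + β * ⟪a, y - z⟫ := by
    have : α • x + β • y - z = α • (x - z) + β • (y - z) := by
      linear_combination (norm := module) hαβ • z
    rw [this, inner_add_right, inner_smul_right, inner_smul_right]
  have := hf.2 hx hy hα hβ hαβ
  simp only [smul_eq_mul] at this ⊢
  rw [haff]
  linear_combination this + c * hαβ

end Bregman

theorem mirror_descent_step_inequality_general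
    (ρ : ℝ)
    (ψ : E₁ → ℝ) (gψ : E₁ → E₁)
    (hψdiff : ∀ x, HasGradientAt ψ (gψ x) x)
    (hψsc : StrongConvexOn Set.univ ρ ψ)
    (X : Set E₁) (hXcv : Convex ℝ X)
    (h : E₁ → ℝ) (hh : ConvexOn ℝ Set.univ h)
    (z : E₁) (hz : z ∈ X) (w : E₁) (γ : ℝ) (hγ : 0 < γ)
    (xp : E₁) (hxp : xp ∈ X)
    (hxpmin : ∀ u ∈ X,
      ⟪w, xp⟫ + h xp + 1 / γ * (ψ xp - ψ z - ⟪gψ z, xp - z⟫) ≤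
        ⟪w, u⟫ + h u + 1 / γ * (ψ u - ψ z - ⟪gψ z, u - z⟫)) :
    ⟪w, (1 / γ) • (z - xp)⟫ ≥
      ρ * ‖(1 / γ) • (z - xp)‖ ^ 2 + 1 / γ * (h xp - h z) := by
  have hγ' : 0 ≤ 1 / γ := by positivity
  have hobj : StrongConvexOn X (1 / γ * ρ)
      fun u ↦ ⟪w, u⟫ + h u + 1 / γ * (ψ u - ψ z - ⟪gψ z, u - z⟫) :=
    (((innerₛₗ ℝ w).convexOn hXcv).add (hh.subset (subset_univ X) hXcv)).add_strongConvexOn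
      (((hψsc.subset (subset_univ X) hXcv).sub_sub_inner (ψ z) (gψ z) z).const_mul hγ')
  have hgrowth := hobj.add_sq_norm_le_of_isMinOn hxp hz (isMinOn_iff.2 hxpmin)
  have hbregman := hψsc.add_fderiv_add_sq_norm_le (mem_univ z) (mem_univ xp) (hψdiff z).hasFDerivAt
  simp only [sub_self, inner_zero_right, mul_zero, add_zero] at hgrowth
  rw [InnerProductSpace.toDual_apply_apply, norm_sub_rev] at hbregman
  have hunscaled : h xp - h z + 1 / γ * ρ * ‖z - xp‖ ^ 2 ≤ ⟪w, z - xp⟫ := by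
    rw [inner_sub_right]
    nlinarith [mul_le_mul_of_nonneg_left hbregman hγ']
  rw [inner_smul_right, norm_smul, mul_pow, Real.norm_eq_abs, sq_abs]
  nlinarith [mul_le_mul_of_nonneg_left hunscaled hγ']

/-- Mirror-descent step property: if `x⁺` minimizes `x ↦ ⟨w, x⟩ + h(x) + (1/γ)D_ψ(x, z)` over
`𝒳` and `Ĝ = (z − x⁺)/γ`, then `⟨w, Ĝ⟩ ≥ ρ‖Ĝ‖² + (1/γ)(h(x⁺) − h(z))`. -/
theorem mirror_descent_step_inequality
    (hd₁ : 0 < d₁) (ρ : ℝ) (hρ : 0 < ρ)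
    (ψ : E₁ → ℝ) (gψ : E₁ → E₁)
    (hψdiff : ∀ x, HasGradientAt ψ (gψ x) x)
    (hψsc : StrongConvexOn Set.univ ρ ψ)
    (X : Set E₁) (hXne : X.Nonempty) (hXcl : IsClosed X) (hXcv : Convex ℝ X)
    (h : E₁ → ℝ) (hh : ConvexOn ℝ Set.univ h)
    (z : E₁) (hz : z ∈ X) (w : E₁) (γ : ℝ) (hγ : 0 < γ)
    (xp : E₁) (hxp : xp ∈ X)
    (hxpmin : ∀ u ∈ X,
      ⟪w, xp⟫ + h xp + 1 / γ * (ψ xp - ψ z - ⟪gψ z, xp - z⟫) ≤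
        ⟪w, u⟫ + h u + 1 / γ * (ψ u - ψ z - ⟪gψ z, u - z⟫)) :
    ⟪w, (1 / γ) • (z - xp)⟫ ≥
      ρ * ‖(1 / γ) • (z - xp)‖ ^ 2 + 1 / γ * (h xp - h z) :=
  mirror_descent_step_inequality_general ρ ψ gψ hψdiff hψsc X hXcv h hh z hz w γ hγ xp hxp hxpmin
end
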